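/- arXiv:2407.02794 — 5 statements merged into one kernel-verified Lean document; each statement's English description precedes it below -/
import Mathlib

section
/- Let a, τ, α₀, p be real numbers with a > 0, τ > 0, α₀ > 0 and p > 0, and define g : ℝ → ℝ by g(y) = a²·y³ + a·(2 − a·p)·y² + (1 − 2·a·p)·y − p + a·τ·α₀. If a·τ·α₀ < p ≤ 1/(2a), then there exists exactly one y > 0 with g(y) = 0. -/
/-!
Completing the cube shows `g y = (y - p) (1 + a y)² + a τ α₀`. For `2 a p ≤ 1` the map
`y ↦ (y - p) (1 + a y)²` is strictly increasing on `[0, ∞)`, and `g 0 = a τ α₀ - p < 0 < a τ α₀ = g p`,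
so the intermediate value theorem gives a root in `(0, p)` and monotonicity makes it unique.
-/

open Set

lemma strictMonoOn_sub_mul_one_add_mul_sq {a p : ℝ} (ha : 0 ≤ a) (hap : 2 * a * p ≤ 1) :
    StrictMonoOn (fun y => (y - p) * (1 + a * y) ^ 2) (Ici 0) := by
  intro x hx y _ hxy
  rw [mem_Ici] at hx
  have hdiff : (y - p) * (1 + a * y) ^ 2 - (x - p) * (1 + a * x) ^ 2
      = (y - x) * ((1 + a * y) ^ 2 + a * (x - p) * (2 + a * x + a * y)) := by ring
  have hfactor : 0 < (1 + a * y) ^ 2 + a * (x - p) * (2 + a * x + a * y) := by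
    rcases ha.eq_or_lt with rfl | ha
    · norm_num
    -- `2 a p ≤ 1` lets `a x + a y` absorb the negative terms `-a² p (x + y)`.
    have hay : 0 < a * y := mul_pos ha (hx.trans_lt hxy)
    nlinarith [mul_nonneg ha.le hx, mul_nonneg (mul_nonneg ha.le hx) hay.le,
      mul_nonneg (mul_nonneg ha.le hx) (sub_nonneg.2 hap), mul_nonneg hay.le (sub_nonneg.2 hap)]
  nlinarith [mul_pos (sub_pos.2 hxy) hfactor]

lemma existsUnique_pos_root_of_strictMonoOn {f : ℝ → ℝ} {b : ℝ} (hb : 0 ≤ b)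
    (hf : ContinuousOn f (Icc 0 b)) (hmono : StrictMonoOn f (Ici 0)) (h0 : f 0 < 0)
    (hfb : 0 < f b) : ∃! y, 0 < y ∧ f y = 0 := by
  obtain ⟨y, hy, hfy⟩ := intermediate_value_Ioo hb hf ⟨h0, hfb⟩
  exact ⟨y, ⟨hy.1, hfy⟩, fun z ⟨hz, hfz⟩ =>
    hmono.injOn (mem_Ici.2 hz.le) (mem_Ici.2 hy.1.le) (hfz.trans hfy.symm)⟩

theorem cubic_unique_positive_root_general
    (a τ α₀ p : ℝ) (ha : 0 < a) (hτ : 0 < τ) (hα : 0 < α₀)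
    (g : ℝ → ℝ)
    (hg : ∀ y, g y = a^2 * y^3 + a * (2 - a*p) * y^2 + (1 - 2*a*p) * y - p + a*τ*α₀)
    (h1 : a*τ*α₀ < p) (h2 : p ≤ 1/(2*a)) :
    ∃! y : ℝ, 0 < y ∧ g y = 0 := by
  have hap : 2 * a * p ≤ 1 := by rwa [le_div_iff₀ (by positivity), mul_comm] at h2
  have hc : 0 < a * τ * α₀ := by positivity
  have hg' : g = fun y => (y - p) * (1 + a * y) ^ 2 + a * τ * α₀ := by
    funext y; rw [hg]; ring
  subst hg'
  refine existsUnique_pos_root_of_strictMonoOn (b := p) (by linarith) (by fun_prop) ?_ ?_ ?_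
  · exact fun x hx y hy hxy =>
      add_lt_add_left (strictMonoOn_sub_mul_one_add_mul_sq ha.le hap hx hy hxy) _
  · linarith
  · simpa using hc

/-- If `aτα₀ < p ≤ 1/(2a)`, the cubic
`g(y) = a²y³ + a(2 − ap)y² + (1 − 2ap)y − p + aτα₀` has exactly one positive root. -/
theorem cubic_unique_positive_root
    (a τ α₀ p : ℝ) (ha : 0 < a) (hτ : 0 < τ) (hα : 0 < α₀) (hp : 0 < p)
    (g : ℝ → ℝ)
    (hg : ∀ y, g y = a^2 * y^3 + a * (2 - a*p) * y^2 + (1 - 2*a*p) * y - p + a*τ*α₀)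
    (h1 : a*τ*α₀ < p) (h2 : p ≤ 1/(2*a)) :
    ∃! y : ℝ, 0 < y ∧ g y = 0 :=
  cubic_unique_positive_root_general a τ α₀ p ha hτ hα g hg h1 h2
end

section
/- Let a, τ, α₀, p be real numbers with a > 0, τ > 0, α₀ > 0 and p > 0, and define g : ℝ → ℝ by g(y) = a²·y³ + a·(2 − a·p)·y² + (1 − 2·a·p)·y − p + a·τ·α₀. If p > 1/(2a), then g has a root in (0, +∞) if and only if 4·(a·p + 1)³ ≥ 27·a²·τ·α₀ (equivalently, if and only if the quantity u(p) := 4a³p³ + 3a²(4p² − 9τα₀) + 12ap + 4 is nonnegative). -/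
/-- If `p > 1/(2a)`, the cubic `g(y) = a²y³ + a(2 − ap)y² + (1 − 2ap)y − p + aτα₀` has a
positive root iff `4(ap + 1)³ ≥ 27a²τα₀`, equivalently iff
`u(p) = 4a³p³ + 3a²(4p² − 9τα₀) + 12ap + 4 ≥ 0`. -/
theorem cubic_positive_root_iff
    (a τ α₀ p : ℝ) (ha : 0 < a) (hτ : 0 < τ) (hα : 0 < α₀) (hp : 0 < p)
    (g : ℝ → ℝ)
    (hg : ∀ y, g y = a^2 * y^3 + a * (2 - a*p) * y^2 + (1 - 2*a*p) * y - p + a*τ*α₀)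
    (hp2 : 1/(2*a) < p) :
    ((∃ y : ℝ, 0 < y ∧ g y = 0) ↔ 4*(a*p + 1)^3 ≥ 27*a^2*τ*α₀) ∧
    ((∃ y : ℝ, 0 < y ∧ g y = 0) ↔
      0 ≤ 4*a^3*p^3 + 3*a^2*(4*p^2 - 9*τ*α₀) + 12*a*p + 4) := by
  have hap : 1 < 2 * a * p := by
    have := (div_lt_iff₀ (by positivity : (0:ℝ) < 2*a)).mp hp2
    linarith [this]
  have main : (∃ y : ℝ, 0 < y ∧ g y = 0) ↔ 4*(a*p + 1)^3 ≥ 27*a^2*τ*α₀ := by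
    constructor
    · rintro ⟨y, hy, hgy⟩
      rw [hg y] at hgy
      have key : 4*(a*p + 1)^3 - 27*a^2*τ*α₀ =
          (3*a*y - (2*a*p - 1))^2 * (3*a*y + a*p + 4) - 27*a*(a^2 * y^3 + a * (2 - a*p) * y^2 + (1 - 2*a*p) * y - p + a*τ*α₀) := by
        ring
      rw [hgy, mul_zero, sub_zero] at key
      nlinarith [sq_nonneg (3*a*y - (2*a*p - 1)), mul_pos ha hy, mul_pos ha hp]
    · intro h
      set y₂ : ℝ := (2*a*p - 1)/(3*a) with hy₂def
      have hy₂pos : 0 < y₂ := by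
        apply div_pos <;> linarith
      set M : ℝ := 2*p + 2/a with hM
      have hMy₂ : y₂ ≤ M := by
        rw [hy₂def, div_le_iff₀ (by positivity : (0:ℝ) < 3*a), hM]
        have h1 : a * (2/a) = 2 := by field_simp
        nlinarith [mul_pos ha hp, h1]
      have hgy₂ : g y₂ ≤ 0 := by
        have h27 : 27*a*g y₂ = 27*a^2*τ*α₀ - 4*(a*p + 1)^3 := by
          rw [hg, hy₂def]
          field_simp
          ring
        nlinarith [mul_pos ha (mul_pos hτ hα)]
      have hgM : 0 ≤ g M := by
        have h2 : a * g M = 4*(a*p)^3 + 20*(a*p)^2 + 33*(a*p) + 18 + a^2*τ*α₀ := by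
          rw [hg, hM]
          field_simp
          ring
        nlinarith [mul_pos ha hp, mul_pos (mul_pos ha hp) (mul_pos ha hp),
          mul_pos (mul_pos (mul_pos ha hp) (mul_pos ha hp)) (mul_pos ha hp),
          mul_pos (mul_pos ha ha) (mul_pos hτ hα)]
      have hcont : Continuous g := by
        have : g = fun y => a^2 * y^3 + a * (2 - a*p) * y^2 + (1 - 2*a*p) * y - p + a*τ*α₀ :=
          funext hg
        rw [this]; continuity
      have := intermediate_value_Icc hMy₂ hcont.continuousOn
      have h0 : (0:ℝ) ∈ Set.Icc (g y₂) (g M) := ⟨hgy₂, hgM⟩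
      obtain ⟨y, hyIcc, hgy⟩ := this h0
      exact ⟨y, lt_of_lt_of_le hy₂pos hyIcc.1, hgy⟩
  refine ⟨main, main.trans ?_⟩
  constructor <;> intro h <;> nlinarith [h]
end

section
/- Let a, τ, α₀, p be real numbers with a > 0, τ > 0, α₀ > 0 and p > 0, and define g : ℝ → ℝ by g(y) = a²·y³ + a·(2 − a·p)·y² + (1 − 2·a·p)·y − p + a·τ·α₀. If p > 1/(2a), then the value of g at its local minimum point y₂ = (2ap − 1)/(3a) is negative if and only if p > p* := 3·(τ·α₀/(4a))^{1/3} − 1/a. -/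
/-- If `p > 1/(2a)`, the value of the cubic
`g(y) = a²y³ + a(2 − ap)y² + (1 − 2ap)y − p + aτα₀` at its local minimum point
`y₂ = (2ap − 1)/(3a)` is negative iff `p > p* = 3(τα₀/(4a))^{1/3} − 1/a`. -/
theorem cubic_local_min_value_neg_iff
    (a τ α₀ p : ℝ) (ha : 0 < a) (hτ : 0 < τ) (hα : 0 < α₀) (hp : 0 < p)
    (g : ℝ → ℝ)
    (hg : ∀ y, g y = a^2 * y^3 + a * (2 - a*p) * y^2 + (1 - 2*a*p) * y - p + a*τ*α₀)
    (hp2 : 1/(2*a) < p) :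
    g ((2*a*p - 1)/(3*a)) < 0 ↔ 3 * (τ*α₀/(4*a)) ^ ((1:ℝ)/3) - 1/a < p := by
  have ha' : a ≠ 0 := ha.ne'
  set c : ℝ := τ*α₀/(4*a) with hcdef
  have hc : (0:ℝ) < c := by positivity
  have hr : (0:ℝ) ≤ c ^ ((1:ℝ)/3) := Real.rpow_nonneg hc.le _
  have hcube : (c ^ ((1:ℝ)/3))^(3:ℕ) = c := by
    rw [← Real.rpow_natCast (c ^ ((1:ℝ)/3)) 3, ← Real.rpow_mul hc.le]
    norm_num
  have hgval : g ((2*a*p - 1)/(3*a)) = a*τ*α₀ - (2*a*p+2)^3/(54*a) := by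
    rw [hg]; field_simp; ring
  have hu : (0:ℝ) < 2*a*p+2 := by positivity
  rw [hgval]
  have h1 : a*τ*α₀ - (2*a*p+2)^3/(54*a) < 0 ↔
      (6*a*(c ^ ((1:ℝ)/3)))^(3:ℕ) < (2*a*p+2)^(3:ℕ) := by
    rw [sub_neg, mul_pow, mul_pow, hcube,
      lt_div_iff₀ (by positivity : (0:ℝ) < 54*a),
      show a*τ*α₀*(54*a) = 6^3*a^3*c from by rw [hcdef]; field_simp; ring]
  rw [h1, pow_lt_pow_iff_left₀ (by positivity) hu.le (by norm_num)]
  have hinv : (1/a)*a = 1 := by field_simp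
  constructor <;> intro h <;> nlinarith [hinv, ha, h]
end

section
/- Let a, τ, α₀, p be real numbers with a > 0, τ > 0, α₀ > 0 and p > 0, and define g : ℝ → ℝ by g(y) = a²·y³ + a·(2 − a·p)·y² + (1 − 2·a·p)·y − p + a·τ·α₀. If 2·τ·α₀ < 1/a² and p > (τ·α₀/2)^{1/2}, then g has at least one root in (0, +∞). -/
/-- If `2τα₀ < 1/a²` and `p > (τα₀/2)^{1/2}`, then the cubic
`g(y) = a²y³ + a(2 − ap)y² + (1 − 2ap)y − p + aτα₀` has at least one positive root. -/
theorem cubic_exists_positive_root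
    (a τ α₀ p : ℝ) (ha : 0 < a) (hτ : 0 < τ) (hα : 0 < α₀) (hp : 0 < p)
    (g : ℝ → ℝ)
    (hg : ∀ y, g y = a^2 * y^3 + a * (2 - a*p) * y^2 + (1 - 2*a*p) * y - p + a*τ*α₀)
    (hstep : 2*τ*α₀ < 1/a^2) (hthr : Real.sqrt (τ*α₀/2) < p) :
    ∃ y : ℝ, 0 < y ∧ g y = 0 := by
  have hgc : Continuous g := by
    have : g = fun y => a^2 * y^3 + a * (2 - a*p) * y^2 + (1 - 2*a*p) * y - p + a*τ*α₀ :=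
      funext hg
    rw [this]; continuity
  set s := Real.sqrt (τ*α₀/2) with hs
  have hs0 : 0 ≤ s := Real.sqrt_nonneg _
  have hs2 : s^2 = τ*α₀/2 := Real.sq_sqrt (by positivity)
  have hstep' : a^2 * (2*τ*α₀) < 1 := by
    rw [div_eq_inv_mul, mul_one] at hstep
    calc a^2 * (2*τ*α₀) < a^2 * (a^2)⁻¹ := by
          exact mul_lt_mul_of_pos_left hstep (by positivity)
      _ = 1 := by field_simp
  have hkey : a*τ*α₀ < p := by
    have h1 : a*τ*α₀ < s := by
      nlinarith [sq_nonneg (s - a*τ*α₀), sq_nonneg (s + a*τ*α₀), mul_pos hτ hα]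
    linarith
  have hg0 : g 0 < 0 := by rw [hg]; nlinarith
  have hgp : 0 < g p := by
    rw [hg]
    have : a^2 * p^3 + a * (2 - a*p) * p^2 + (1 - 2*a*p) * p - p + a*τ*α₀ = a*τ*α₀ := by ring
    rw [this]; positivity
  have := intermediate_value_Ioo (le_of_lt hp) hgc.continuousOn
  have h0 : (0:ℝ) ∈ Set.Ioo (g 0) (g p) := ⟨hg0, hgp⟩
  obtain ⟨y, hy, hgy⟩ := this h0
  exact ⟨y, hy.1, hgy⟩
end

section
/- Let a > 0 and β > 0 be real numbers, let p ∈ ℝ² (Euclidean norm), and define F : ℝ² → ℝ by F(q) = (1/2)‖q − p‖² + β·a‖q‖/(1 + a‖q‖). Then F is differentiable at every q ≠ 0, and if q* ≠ 0 is a critical point of F (its Fréchet derivative at q* vanishes), then (‖q*‖ + β·a/(1 + a‖q*‖)²) · (q*/‖q*‖) = p; in particular p ≠ 0, q* is a positive scalar multiple of p, and y := ‖q*‖ satisfies y + β·a/(1 + a·y)² = ‖p‖, equivalently a²·y³ + a·(2 − a‖p‖)·y² + (1 − 2a‖p‖)·y − ‖p‖ + a·β = 0. -/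
/-!
Away from `0` the norm is differentiable with gradient `normalize q = q/‖q‖`, so the gradient of
`F` at `q ≠ 0` is `(q - p) + c • normalize q` with `c = βa/(1 + a‖q‖)² > 0`. At a critical point
this says `p = (‖q‖ + c) • normalize q`: `p` is a positive multiple of the unit vector in the
direction of `q`, taking norms gives `‖q‖ + c = ‖p‖`, and clearing the denominator `(1 + a‖q‖)²`
gives the cubic.
-/

open NormedSpace

variable {E : Type*} [NormedAddCommGroup E] [InnerProductSpace ℝ E]

theorem hasFDerivAt_norm_of_ne_zero {x : E} (hx : x ≠ 0) :
    HasFDerivAt (‖·‖) (innerSL ℝ (normalize x)) x := by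
  have hsqrt := (hasStrictFDerivAt_norm_sq x).hasFDerivAt.sqrt (by positivity)
  simp only [Real.sqrt_sq (norm_nonneg _)] at hsqrt
  refine hsqrt.congr_fderiv ?_
  ext y
  simp only [smul_apply, innerSL_apply_apply, NormedSpace.normalize, real_inner_smul_left,
    nsmul_eq_mul, smul_eq_mul]
  field_simp
  ring

theorem eq_zero_of_innerSL_eq_zero {v : E} (h : innerSL ℝ v = 0) : v = 0 :=
  norm_eq_zero.1 (by rw [← innerSL_apply_norm ℝ, h, norm_zero])

theorem hasDerivAt_mul_div_one_add_mul {a t : ℝ} (h : 1 + a * t ≠ 0) :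
    HasDerivAt (fun s => a * s / (1 + a * s)) (a / (1 + a * t) ^ 2) t := by
  have hnum : HasDerivAt (fun s => a * s) a t := by
    simpa using (hasDerivAt_id t).const_mul a
  refine (hnum.div (hnum.const_add 1) h).congr_deriv ?_
  field_simp
  ring

theorem cubic_eq_zero_of_add_div_sq_eq {a β y s : ℝ} (h : 1 + a * y ≠ 0)
    (hy : y + β * a / (1 + a * y) ^ 2 = s) :
    a^2*y^3 + a*(2 - a*s)*y^2 + (1 - 2*a*s)*y - s + a*β = 0 := by
  rw [← hy]
  field_simp
  ring

noncomputable def smoothedL0ProxObjective (a β : ℝ) (p q : E) : ℝ :=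
  (1/2) * ‖q - p‖^2 + β * (a * ‖q‖ / (1 + a * ‖q‖))

theorem hasFDerivAt_smoothedL0ProxObjective {a : ℝ} (ha : 0 ≤ a) (β : ℝ) (p : E) {x : E}
    (hx : x ≠ 0) :
    HasFDerivAt (smoothedL0ProxObjective a β p)
      (innerSL ℝ ((x - p) + (β * a / (1 + a * ‖x‖) ^ 2) • normalize x)) x := by
  have hfidelity : HasFDerivAt (fun q : E => (1/2) * ‖q - p‖^2)
      ((1/2 : ℝ) • (2 • innerSL ℝ (x - p))) x := by
    simpa using (((hasFDerivAt_id x).sub_const p).norm_sq).const_mul (1/2 : ℝ)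
  have hpenalty := ((hasDerivAt_mul_div_one_add_mul (a := a) (t := ‖x‖) (by positivity)).const_mul
    β).comp_hasFDerivAt x (hasFDerivAt_norm_of_ne_zero hx)
  refine (hfidelity.add hpenalty).congr_fderiv ?_
  ext y
  simp only [add_apply, smul_apply, innerSL_apply_apply, inner_add_left, real_inner_smul_left,
    nsmul_eq_mul, smul_eq_mul]
  ring

theorem add_smul_normalize_eq_of_sub_add_smul_normalize_eq_zero {p q : E} {c : ℝ}
    (h : (q - p) + c • normalize q = 0) : (‖q‖ + c) • normalize q = p := by
  rw [add_smul, norm_smul_normalize]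
  linear_combination (norm := module) h

theorem exists_pos_smul_of_pos_smul_normalize_eq {p q : E} {r : ℝ} (hq : q ≠ 0) (hr : 0 < r)
    (h : r • normalize q = p) : ∃ c : ℝ, 0 < c ∧ q = c • p :=
  ⟨‖q‖ / r, by positivity, by rw [← h, smul_smul, div_mul_cancel₀ _ hr.ne', norm_smul_normalize]⟩

/-- Optimality condition (3.10) for the smoothed L⁰ proximal subproblem:
`F(q) = (1/2)‖q − p‖² + β·a‖q‖/(1 + a‖q‖)` is differentiable away from `0`, and any
nonzero critical point `q*` satisfies
`(‖q*‖ + βa/(1 + a‖q*‖)²)·(q*/‖q*‖) = p`; in particular `p ≠ 0`, `q*` is a positive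
multiple of `p`, and `y = ‖q*‖` solves the associated cubic equation. -/
theorem smoothed_L0_prox_critical_point
    (a β : ℝ) (ha : 0 < a) (hβ : 0 < β)
    (p : EuclideanSpace ℝ (Fin 2))
    (F : EuclideanSpace ℝ (Fin 2) → ℝ)
    (hF : ∀ q, F q = (1/2) * ‖q - p‖^2 + β * (a * ‖q‖ / (1 + a * ‖q‖))) :
    (∀ q : EuclideanSpace ℝ (Fin 2), q ≠ 0 → DifferentiableAt ℝ F q) ∧
    (∀ q : EuclideanSpace ℝ (Fin 2), q ≠ 0 → fderiv ℝ F q = 0 →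
      (‖q‖ + β*a/(1 + a*‖q‖)^2) • (‖q‖⁻¹ • q) = p ∧
      p ≠ 0 ∧
      (∃ c : ℝ, 0 < c ∧ q = c • p) ∧
      ‖q‖ + β*a/(1 + a*‖q‖)^2 = ‖p‖ ∧
      a^2*‖q‖^3 + a*(2 - a*‖p‖)*‖q‖^2 + (1 - 2*a*‖p‖)*‖q‖ - ‖p‖ + a*β = 0) := by
  obtain rfl : F = smoothedL0ProxObjective a β p := funext hF
  refine ⟨fun q hq => (hasFDerivAt_smoothedL0ProxObjective ha.le β p hq).differentiableAt,
    fun q hq hcrit => ?_⟩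
  have hgrad := (hasFDerivAt_smoothedL0ProxObjective ha.le β p hq).fderiv
  rw [hcrit] at hgrad
  have hp := add_smul_normalize_eq_of_sub_add_smul_normalize_eq_zero
    (eq_zero_of_innerSL_eq_zero hgrad.symm)
  have hr : 0 < ‖q‖ + β * a / (1 + a * ‖q‖) ^ 2 := by
    have := norm_pos_iff.mpr hq
    positivity
  have hnorm : ‖q‖ + β * a / (1 + a * ‖q‖) ^ 2 = ‖p‖ := by
    rw [← hp, norm_smul, norm_normalize hq, mul_one, Real.norm_of_nonneg hr.le]
  refine ⟨hp, norm_pos_iff.mp (hnorm ▸ hr), exists_pos_smul_of_pos_smul_normalize_eq hq hr hp,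
    hnorm, cubic_eq_zero_of_add_div_sq_eq (by positivity) hnorm⟩
end
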